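/- (First hypergeometric representation, discrete case, q(G) = G.) Let P_n = Σ_{j=0}^n G^j(φ_n)/j! with G = R(H)∘Δ. Then for every n ≥ 0, P_n(x) = Σ_{j=0}^n [ρ^j (−1)^{(d+1)j} (−n)_j ∏_{k=1}^d (−n−α_k)_j / j!] · φ_{n−j}(x), which is the terminating series (d+1)F1(−n, −n−α_1,…,−n−α_d; x−n+1; (−1)^{d+1}ρ) multiplied by (−1)^n(−x)_n = φ_n(x). -/
import Mathlib


open Polynomial

/-- Pochhammer symbol `(a)_j = a(a+1)⋯(a+j−1)`. -/
noncomputable def poch (a : ℂ) (j : ℕ) : ℂ := ∏ s ∈ Finset.range j, (a + s)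

/-- Multiplication by `x` on `ℂ[x]`. -/
noncomputable def Xop : Module.End ℂ (Polynomial ℂ) := LinearMap.mulLeft ℂ Polynomial.X

/-- The shift operator `f(x) ↦ f(x + c)` on `ℂ[x]`. -/
noncomputable def shiftOp (c : ℂ) : Module.End ℂ (Polynomial ℂ) :=
  (Polynomial.aeval (Polynomial.X + Polynomial.C c) :
    Polynomial ℂ →ₐ[ℂ] Polynomial ℂ).toLinearMap

/-- `(Δf)(x) = f(x+1) − f(x)`. -/
noncomputable def Delt : Module.End ℂ (Polynomial ℂ) := shiftOp 1 - 1

/-- `(∇f)(x) = f(x−1) − f(x)`. -/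
noncomputable def Nabl : Module.End ℂ (Polynomial ℂ) := shiftOp (-1) - 1

/-- `H = −x∇`, i.e., `(Hf)(x) = x(f(x) − f(x−1))`. -/
noncomputable def Hdis : Module.End ℂ (Polynomial ℂ) := -(Xop * Nabl)

/-- The falling-factorial polynomial `φ_n(x) = x(x−1)⋯(x−n+1)`. -/
noncomputable def ffact (n : ℕ) : Polynomial ℂ :=
  ∏ s ∈ Finset.range n, (Polynomial.X - Polynomial.C (s : ℂ))

/-- `G = R(H)∘Δ` with `R(H) = ρ·∏_{k=1}^d (H + α_k + 1)`. -/
noncomputable def Gdis (d : ℕ) (α : ℕ → ℂ) (ρ : ℂ) : Module.End ℂ (Polynomial ℂ) :=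
  (Polynomial.aeval Hdis
    (Polynomial.C ρ * ∏ k ∈ Finset.range d, (Polynomial.X + Polynomial.C (α k + 1)))) * Delt

lemma shiftOp_ffact (c : ℂ) (n : ℕ) :
    shiftOp c (ffact n) = ∏ s ∈ Finset.range n, (X + C c - C (s : ℂ)) := by
  simp [shiftOp, ffact, map_prod]

lemma ffact_monic (n : ℕ) : (ffact n).Monic :=
  monic_prod_of_monic _ _ fun s _ => monic_X_sub_C _

lemma ffact_ne_zero (n : ℕ) : ffact n ≠ 0 := (ffact_monic n).ne_zero

lemma Delt_ffact (n : ℕ) : Delt (ffact (n + 1)) = ((n : ℂ) + 1) • ffact n := by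
  have h1 : shiftOp 1 (ffact (n + 1)) = (X + 1) * ffact n := by
    rw [shiftOp_ffact, Finset.prod_range_succ']
    rw [mul_comm]
    congr 1
    · simp
    · rw [ffact]
      refine Finset.prod_congr rfl fun s _ => ?_
      have : ((s + 1 : ℕ) : ℂ) = (s : ℂ) + 1 := by push_cast; ring
      rw [this, C_add, C_1]; ring
  have h2 : ffact (n + 1) = ffact n * (X - C (n : ℂ)) := by
    simp [ffact, Finset.prod_range_succ]
  rw [Delt, LinearMap.sub_apply, Module.End.one_apply, h1, h2, smul_eq_C_mul, C_add, C_1]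
  ring

lemma Hdis_ffact (n : ℕ) : Hdis (ffact n) = (n : ℂ) • ffact n := by
  cases n with
  | zero => simp [ffact, Hdis, Nabl, shiftOp]
  | succ m =>
    have h1 : shiftOp (-1) (ffact (m + 1))
        = (∏ s ∈ Finset.range m, (X - C (s : ℂ) - 1)) * (X - C (m : ℂ) - 1) := by
      rw [shiftOp_ffact, Finset.prod_range_succ]
      congr 1
      · refine Finset.prod_congr rfl fun s _ => ?_
        rw [C_neg, C_1]; ring
      · rw [C_neg, C_1]; ring
    have h2 : ffact (m + 1) = X * ∏ s ∈ Finset.range m, (X - C (s : ℂ) - 1) := by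
      rw [ffact, Finset.prod_range_succ', mul_comm]
      congr 1
      · simp
      · refine Finset.prod_congr rfl fun s _ => ?_
        have : ((s + 1 : ℕ) : ℂ) = (s : ℂ) + 1 := by push_cast; ring
        rw [this, C_add, C_1]; ring
    rw [Hdis, LinearMap.neg_apply, Module.End.mul_apply]
    rw [Nabl, LinearMap.sub_apply, Module.End.one_apply, h1]
    rw [Xop, LinearMap.mulLeft_apply]
    rw [h2, smul_eq_C_mul]
    have : ((m + 1 : ℕ) : ℂ) = (m : ℂ) + 1 := by push_cast; ring
    rw [this, C_add, C_1]
    ring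

lemma aeval_Hdis_ffact (p : Polynomial ℂ) (n : ℕ) :
    (Polynomial.aeval Hdis p) (ffact n) = p.eval (n : ℂ) • ffact n :=
  Module.End.aeval_apply_of_hasEigenvector
    ⟨Module.End.mem_eigenspace_iff.mpr (Hdis_ffact n), ffact_ne_zero n⟩

lemma Gdis_ffact (d : ℕ) (α : ℕ → ℂ) (ρ : ℂ) (m : ℕ) :
    Gdis d α ρ (ffact (m + 1))
      = (((m : ℂ) + 1) * (ρ * ∏ k ∈ Finset.range d, ((m : ℂ) + α k + 1))) • ffact m := by
  rw [Gdis, Module.End.mul_apply, Delt_ffact, map_smul, aeval_Hdis_ffact, smul_smul]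
  congr 1
  rw [eval_mul, eval_C, eval_prod]
  have : ∏ k ∈ Finset.range d, eval (m : ℂ) (X + C (α k + 1))
      = ∏ k ∈ Finset.range d, ((m : ℂ) + α k + 1) := by
    refine Finset.prod_congr rfl fun k _ => ?_
    simp; ring
  rw [this]

noncomputable def cf (d : ℕ) (α : ℕ → ℂ) (ρ : ℂ) (n j : ℕ) : ℂ :=
  ∏ i ∈ Finset.range j, (ρ * ((n : ℂ) - i) * ∏ k ∈ Finset.range d, ((n : ℂ) - i + α k))

lemma cf_succ (d : ℕ) (α : ℕ → ℂ) (ρ : ℂ) (m j : ℕ) :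
    cf d α ρ (m + 1) (j + 1)
      = (ρ * ((m : ℂ) + 1) * ∏ k ∈ Finset.range d, ((m : ℂ) + 1 + α k)) * cf d α ρ m j := by
  rw [cf, cf, Finset.prod_range_succ', mul_comm]
  congr 1
  · have h0 : (((m + 1 : ℕ) : ℂ) - ((0 : ℕ) : ℂ)) = (m : ℂ) + 1 := by push_cast; ring
    rw [h0]
  · refine Finset.prod_congr rfl fun i _ => ?_
    have h0 : (((m + 1 : ℕ) : ℂ) - ((i + 1 : ℕ) : ℂ)) = (m : ℂ) - i := by push_cast; ring
    rw [h0]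

lemma Gdis_pow_ffact (d : ℕ) (α : ℕ → ℂ) (ρ : ℂ) (j : ℕ) :
    ∀ n : ℕ, j ≤ n → ((Gdis d α ρ) ^ j) (ffact n) = cf d α ρ n j • ffact (n - j) := by
  induction j with
  | zero => intro n _; simp [cf]
  | succ j ih =>
    intro n hj
    obtain ⟨m, rfl⟩ : ∃ m, n = m + 1 := ⟨n - 1, by omega⟩
    rw [pow_succ, Module.End.mul_apply, Gdis_ffact, map_smul, ih m (by omega), smul_smul]
    have hms : m + 1 - (j + 1) = m - j := by omega
    rw [hms, cf_succ]
    congr 1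
    have hp : ∏ k ∈ Finset.range d, ((m : ℂ) + α k + 1)
        = ∏ k ∈ Finset.range d, ((m : ℂ) + 1 + α k) :=
      Finset.prod_congr rfl fun k _ => by ring
    rw [hp]
    ring

lemma coeff_eq (d : ℕ) (α : ℕ → ℂ) (ρ : ℂ) (n j : ℕ) :
    ρ ^ j * (-1 : ℂ) ^ ((d + 1) * j) * poch (-(n : ℂ)) j
        * ∏ k ∈ Finset.range d, poch (-(n : ℂ) - α k) j
      = cf d α ρ n j := by
  rw [cf]
  have h1 : (∏ k ∈ Finset.range d, poch (-(n : ℂ) - α k) j)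
      = ∏ i ∈ Finset.range j, ∏ k ∈ Finset.range d, (-(n : ℂ) - α k + i) := by
    simp only [poch]; rw [Finset.prod_comm]
  rw [h1, poch]
  have h2 : (ρ : ℂ) ^ j = ∏ _i ∈ Finset.range j, ρ := by simp
  have h3 : (-1 : ℂ) ^ ((d + 1) * j) = ∏ _i ∈ Finset.range j, (-1 : ℂ) ^ (d + 1) := by
    simp [pow_mul, Finset.prod_const]
  rw [h2, h3, ← Finset.prod_mul_distrib, ← Finset.prod_mul_distrib, ← Finset.prod_mul_distrib]
  refine Finset.prod_congr rfl fun i _ => ?_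
  have h4 : ∏ k ∈ Finset.range d, ((n : ℂ) - i + α k)
      = (-1 : ℂ) ^ d * ∏ k ∈ Finset.range d, (-(n : ℂ) - α k + i) := by
    calc ∏ k ∈ Finset.range d, ((n : ℂ) - i + α k)
        = ∏ k ∈ Finset.range d, ((-1) * (-(n : ℂ) - α k + i)) :=
          Finset.prod_congr rfl fun k _ => by ring
      _ = (-1 : ℂ) ^ d * ∏ k ∈ Finset.range d, (-(n : ℂ) - α k + i) := by
          rw [Finset.prod_mul_distrib, Finset.prod_const, Finset.card_range]
  rw [h4, pow_succ]
  ring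

/-- First hypergeometric representation, discrete case, `q(G) = G`:
`P_n = Σ_{j=0}^n [ρ^j (−1)^{(d+1)j} (−n)_j ∏_k (−n−α_k)_j / j!] φ_{n−j}`. -/
theorem stmt14 (d : ℕ) (α : ℕ → ℂ) (ρ : ℂ) (hρ : ρ ≠ 0) (n : ℕ) :
    (∑ j ∈ Finset.range (n + 1),
        ((j.factorial : ℂ))⁻¹ • ((Gdis d α ρ) ^ j) (ffact n))
      = ∑ j ∈ Finset.range (n + 1),
          ((ρ ^ j * (-1 : ℂ) ^ ((d + 1) * j) * poch (-(n : ℂ)) j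
              * ∏ k ∈ Finset.range d, poch (-(n : ℂ) - α k) j) / (j.factorial : ℂ))
            • ffact (n - j) := by
  apply Finset.sum_congr rfl
  intro j hj
  have hjn : j ≤ n := Nat.lt_succ_iff.mp (Finset.mem_range.mp hj)
  rw [Gdis_pow_ffact d α ρ j n hjn, smul_smul, coeff_eq, div_eq_inv_mul]
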